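/- arXiv:1905.07797 — 4 statements merged into one kernel-verified Lean document; each statement's English description precedes it below -/
import Mathlib

section
/- The set function f(S) = log det(A + ∑_{i∈S} B_i), with A positive definite and B_i positive semidefinite, is submodular: for all S ⊆ T and j ∉ T, f(S ∪ {j}) − f(S) ≥ f(T ∪ {j}) − f(T). -/
open Finset

namespace LogDetSubmodAux

open Matrix

variable {n : ℕ}

lemma psd_sum {ι : Type*} [DecidableEq ι] (B : ι → Matrix (Fin n) (Fin n) ℝ)
    (hB : ∀ i, (B i).PosSemidef) (s : Finset ι) : (∑ i ∈ s, B i).PosSemidef := by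
  induction s using Finset.induction with
  | empty => simpa using Matrix.PosSemidef.zero
  | insert _ _ h ih => rw [Finset.sum_insert h]; exact (hB _).add ih

lemma psd_cs (M : Matrix (Fin n) (Fin n) ℝ) (hM : M.PosSemidef) (x y : Fin n → ℝ) :
    (x ⬝ᵥ M *ᵥ y) ^ 2 ≤ (x ⬝ᵥ M *ᵥ x) * (y ⬝ᵥ M *ᵥ y) := by
  obtain ⟨B, rfl⟩ : ∃ B : Matrix (Fin n) (Fin n) ℝ, M = Bᴴ * B := by
    open scoped MatrixOrder in
    exact CStarAlgebra.nonneg_iff_eq_star_mul_self.mp hM.nonneg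
  have key : ∀ u v : Fin n → ℝ, u ⬝ᵥ (Bᴴ * B) *ᵥ v = (B *ᵥ u) ⬝ᵥ (B *ᵥ v) := by
    intro u v
    rw [← Matrix.mulVec_mulVec, Matrix.dotProduct_mulVec, Matrix.vecMul_conjTranspose]
    simp
  rw [key, key, key]
  simpa [dotProduct, pow_two] using
    Finset.sum_mul_sq_le_sq_mul_sq Finset.univ (B *ᵥ x) (B *ᵥ y)

lemma dot_nonneg {M : Matrix (Fin n) (Fin n) ℝ} (hM : M.PosSemidef) (x : Fin n → ℝ) :
    0 ≤ x ⬝ᵥ M *ᵥ x := by simpa using hM.dotProduct_mulVec_nonneg x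

lemma quad_antitone (Y N : Matrix (Fin n) (Fin n) ℝ) (hY : Y.PosDef) (hN : N.PosSemidef)
    (v : Fin n → ℝ) : v ⬝ᵥ (Y + N)⁻¹ *ᵥ v ≤ v ⬝ᵥ Y⁻¹ *ᵥ v := by
  have hP : (Y + N).PosDef := hY.add_posSemidef hN
  set P := Y + N with hPdef
  have hPinv : P * P⁻¹ = 1 := Matrix.mul_nonsing_inv _ (isUnit_iff_ne_zero.mpr hP.det_pos.ne')
  have hYinv : Y * Y⁻¹ = 1 := Matrix.mul_nonsing_inv _ (isUnit_iff_ne_zero.mpr hY.det_pos.ne')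
  set x := P⁻¹ *ᵥ v with hx
  have hPx : P *ᵥ x = v := by rw [hx, Matrix.mulVec_mulVec, hPinv, Matrix.one_mulVec]
  have hYiv : Y *ᵥ (Y⁻¹ *ᵥ v) = v := by rw [Matrix.mulVec_mulVec, hYinv, Matrix.one_mulVec]
  set t := v ⬝ᵥ P⁻¹ *ᵥ v with ht
  set b := v ⬝ᵥ Y⁻¹ *ᵥ v with hb
  have htx : t = x ⬝ᵥ v := dotProduct_comm _ _
  have ht0 : 0 ≤ t := dot_nonneg hP.inv.posSemidef v
  have hb0 : 0 ≤ b := dot_nonneg hY.inv.posSemidef v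
  have hcs := psd_cs Y hY.posSemidef x (Y⁻¹ *ᵥ v)
  rw [hYiv] at hcs
  have hYv : (Y⁻¹ *ᵥ v) ⬝ᵥ v = b := dotProduct_comm _ _
  rw [hYv, ← htx] at hcs
  -- hcs : t ^ 2 ≤ (x ⬝ᵥ Y *ᵥ x) * b
  have hsplit : x ⬝ᵥ P *ᵥ x = x ⬝ᵥ Y *ᵥ x + x ⬝ᵥ N *ᵥ x := by
    rw [hPdef, Matrix.add_mulVec, dotProduct_add]
  have hxPt : x ⬝ᵥ P *ᵥ x = t := by rw [hPx, htx]
  have hNx : 0 ≤ x ⬝ᵥ N *ᵥ x := dot_nonneg hN x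
  have ha : x ⬝ᵥ Y *ᵥ x ≤ t := by linarith [hsplit, hxPt]
  nlinarith [hcs, ha, ht0, hb0]

lemma psd_vecMulVec (v : Fin n → ℝ) : (Matrix.vecMulVec v v).PosSemidef := by
  refine Matrix.PosSemidef.of_dotProduct_mulVec_nonneg ?_ ?_
  · ext i j; simp [Matrix.vecMulVec_apply, Matrix.conjTranspose_apply, mul_comm]
  · intro x
    have : (Matrix.vecMulVec v v) *ᵥ x = (v ⬝ᵥ x) • v := by
      ext i
      simp only [Matrix.mulVec, Matrix.vecMulVec_apply, dotProduct, Pi.smul_apply,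
        smul_eq_mul, Finset.sum_mul, Matrix.of_apply]
      apply Finset.sum_congr rfl; intros; ring
    rw [this]
    simp only [star_trivial, dotProduct_smul]
    have : x ⬝ᵥ v = v ⬝ᵥ x := dotProduct_comm _ _
    simp [this, smul_eq_mul]
    nlinarith [sq_nonneg (v ⬝ᵥ x)]

lemma det_add_vecMulVec (X : Matrix (Fin n) (Fin n) ℝ) (hX : X.PosDef) (v : Fin n → ℝ) :
    (X + Matrix.vecMulVec v v).det = X.det * (1 + v ⬝ᵥ X⁻¹ *ᵥ v) := by
  rw [Matrix.vecMulVec_eq (Fin 1) v v,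
    Matrix.det_add_mul _ _ (isUnit_iff_ne_zero.mpr hX.det_pos.ne')]
  congr 1
  rw [Matrix.det_unique]
  simp only [Matrix.add_apply, Matrix.one_apply_eq, Matrix.mul_apply, Matrix.replicateRow_apply,
    Matrix.replicateCol_apply, dotProduct, Matrix.mulVec]
  congr 1
  simp only [Finset.sum_mul, Finset.mul_sum]
  rw [Finset.sum_comm]
  apply Finset.sum_congr rfl; intro i _
  apply Finset.sum_congr rfl; intro j _
  ring

lemma det_core (M N : Matrix (Fin n) (Fin n) ℝ) (hM : M.PosDef) (hN : N.PosSemidef)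
    (w : Fin n → (Fin n → ℝ)) (s : Finset (Fin n)) :
    M.det * (M + N + ∑ i ∈ s, Matrix.vecMulVec (w i) (w i)).det ≤
      (M + N).det * (M + ∑ i ∈ s, Matrix.vecMulVec (w i) (w i)).det := by
  induction s using Finset.induction with
  | empty => simp [mul_comm]
  | @insert k s hk ih =>
    set W := ∑ i ∈ s, Matrix.vecMulVec (w i) (w i) with hW
    have hWpsd : W.PosSemidef := psd_sum _ (fun i => psd_vecMulVec (w i)) s
    have hY : (M + W).PosDef := hM.add_posSemidef hWpsd
    have hX : (M + N + W).PosDef := (hM.add_posSemidef hN).add_posSemidef hWpsd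
    rw [Finset.sum_insert hk]
    have e1 : M + N + (Matrix.vecMulVec (w k) (w k) + W)
        = (M + N + W) + Matrix.vecMulVec (w k) (w k) := by abel
    have e2 : M + (Matrix.vecMulVec (w k) (w k) + W)
        = (M + W) + Matrix.vecMulVec (w k) (w k) := by abel
    rw [e1, e2, det_add_vecMulVec _ hX, det_add_vecMulVec _ hY]
    have hXY : M + N + W = (M + W) + N := by abel
    have hq : (w k) ⬝ᵥ (M + N + W)⁻¹ *ᵥ (w k) ≤ (w k) ⬝ᵥ (M + W)⁻¹ *ᵥ (w k) := by
      rw [hXY]; exact quad_antitone _ _ hY hN (w k)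
    have hq0 : 0 ≤ (w k) ⬝ᵥ (M + N + W)⁻¹ *ᵥ (w k) := dot_nonneg hX.inv.posSemidef _
    have h1 : (0:ℝ) ≤ M.det * (M + N + W).det :=
      le_of_lt (mul_pos hM.det_pos hX.det_pos)
    calc M.det * ((M + N + W).det * (1 + w k ⬝ᵥ (M + N + W)⁻¹ *ᵥ w k))
        = (M.det * (M + N + W).det) * (1 + w k ⬝ᵥ (M + N + W)⁻¹ *ᵥ w k) := by ring
      _ ≤ ((M + N).det * (M + W).det) * (1 + w k ⬝ᵥ (M + W)⁻¹ *ᵥ w k) := by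
          apply mul_le_mul ih (by linarith) (by linarith) ?_
          exact le_of_lt (mul_pos (hM.add_posSemidef hN).det_pos hY.det_pos)
      _ = (M + N).det * ((M + W).det * (1 + w k ⬝ᵥ (M + W)⁻¹ *ᵥ w k)) := by ring

lemma det_ineq (M N C : Matrix (Fin n) (Fin n) ℝ) (hM : M.PosDef) (hN : N.PosSemidef)
    (hC : C.PosSemidef) :
    M.det * (M + N + C).det ≤ (M + N).det * (M + C).det := by
  obtain ⟨B, rfl⟩ : ∃ B : Matrix (Fin n) (Fin n) ℝ, C = Bᴴ * B := by
    open scoped MatrixOrder in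
    exact CStarAlgebra.nonneg_iff_eq_star_mul_self.mp hC.nonneg
  have hdecomp : Bᴴ * B = ∑ i : Fin n, Matrix.vecMulVec (B i) (B i) := by
    ext j k
    simp [Matrix.mul_apply, Matrix.conjTranspose_apply, Matrix.vecMulVec_apply,
      Matrix.sum_apply]
  rw [hdecomp]
  exact det_core M N hM hN (fun i => B i) Finset.univ

lemma log_step (M N C : Matrix (Fin n) (Fin n) ℝ) (hM : M.PosDef) (hN : N.PosSemidef)
    (hC : C.PosSemidef) :
    Real.log (M + N + C).det - Real.log (M + N).det ≤
      Real.log (M + C).det - Real.log M.det := by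
  have h1 : (0:ℝ) < M.det := hM.det_pos
  have h2 : (0:ℝ) < (M + N).det := (hM.add_posSemidef hN).det_pos
  have h3 : (0:ℝ) < (M + C).det := (hM.add_posSemidef hC).det_pos
  have h4 : (0:ℝ) < (M + N + C).det := ((hM.add_posSemidef hN).add_posSemidef hC).det_pos
  rw [← Real.log_div h4.ne' h2.ne', ← Real.log_div h3.ne' h1.ne']
  rw [Real.log_le_log_iff (div_pos h4 h2) (div_pos h3 h1)]
  rw [div_le_div_iff₀ h2 h1]
  have := det_ineq M N C hM hN hC
  nlinarith [this]

end LogDetSubmodAux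

/-- The set function `f(S) = log det (A + ∑_{i ∈ S} B i)`, with `A` positive
definite and each `B i` positive semidefinite, is submodular: for `S ⊆ T` and
`j ∉ T`, the marginal gain at `T` is at most the marginal gain at `S`. -/
theorem logDet_submodular {n : ℕ} {ι : Type*} [Fintype ι] [DecidableEq ι]
    (A : Matrix (Fin n) (Fin n) ℝ) (hA : A.PosDef)
    (B : ι → Matrix (Fin n) (Fin n) ℝ) (hB : ∀ i, (B i).PosSemidef)
    (S T : Finset ι) (hST : S ⊆ T) (j : ι) (hj : j ∉ T) :
    Real.log (A + ∑ i ∈ insert j T, B i).det - Real.log (A + ∑ i ∈ T, B i).det ≤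
      Real.log (A + ∑ i ∈ insert j S, B i).det - Real.log (A + ∑ i ∈ S, B i).det := by
  have hjS : j ∉ S := fun h => hj (hST h)
  -- one-step marginal monotonicity
  have step : ∀ (U : Finset ι) (k : ι), j ∉ U → k ∉ U → j ≠ k →
      Real.log (A + ∑ i ∈ insert j (insert k U), B i).det -
        Real.log (A + ∑ i ∈ insert k U, B i).det ≤
      Real.log (A + ∑ i ∈ insert j U, B i).det - Real.log (A + ∑ i ∈ U, B i).det := by
    intro U k hjU hkU hjk
    have hMU : (A + ∑ i ∈ U, B i).PosDef :=
      hA.add_posSemidef (LogDetSubmodAux.psd_sum B hB U)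
    have e1 : A + ∑ i ∈ insert k U, B i = (A + ∑ i ∈ U, B i) + B k := by
      rw [Finset.sum_insert hkU]; abel
    have e2 : A + ∑ i ∈ insert j U, B i = (A + ∑ i ∈ U, B i) + B j := by
      rw [Finset.sum_insert hjU]; abel
    have hjkU : j ∉ insert k U := by simp [hjk, hjU]
    have e3 : A + ∑ i ∈ insert j (insert k U), B i
        = (A + ∑ i ∈ U, B i) + B k + B j := by
      rw [Finset.sum_insert hjkU, Finset.sum_insert hkU]; abel
    rw [e1, e2, e3]
    exact LogDetSubmodAux.log_step _ _ _ hMU (hB k) (hB j)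
  -- induction on the added part
  have main : ∀ (D : Finset ι), j ∉ D → Disjoint D S →
      Real.log (A + ∑ i ∈ insert j (S ∪ D), B i).det -
        Real.log (A + ∑ i ∈ S ∪ D, B i).det ≤
      Real.log (A + ∑ i ∈ insert j S, B i).det - Real.log (A + ∑ i ∈ S, B i).det := by
    intro D
    induction D using Finset.induction with
    | empty => simp
    | @insert k D hk ih =>
      intro hjD hdisj
      have hjD' : j ∉ D := fun h => hjD (Finset.mem_insert_of_mem h)
      have hjk : j ≠ k := fun h => hjD (h ▸ Finset.mem_insert_self k D)
      have hkS : k ∉ S := fun h =>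
        (Finset.disjoint_left.mp hdisj (Finset.mem_insert_self k D)) h
      have hdisj' : Disjoint D S := Finset.disjoint_of_subset_left
        (Finset.subset_insert k D) hdisj
      have hUnion : S ∪ insert k D = insert k (S ∪ D) := Finset.union_insert k S D
      have hjSD : j ∉ S ∪ D := by simp [hjS, hjD']
      have hkSD : k ∉ S ∪ D := by simp [hkS, hk]
      calc Real.log (A + ∑ i ∈ insert j (S ∪ insert k D), B i).det -
            Real.log (A + ∑ i ∈ S ∪ insert k D, B i).det
          = Real.log (A + ∑ i ∈ insert j (insert k (S ∪ D)), B i).det -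
            Real.log (A + ∑ i ∈ insert k (S ∪ D), B i).det := by rw [hUnion]
        _ ≤ Real.log (A + ∑ i ∈ insert j (S ∪ D), B i).det -
            Real.log (A + ∑ i ∈ S ∪ D, B i).det := step (S ∪ D) k hjSD hkSD hjk
        _ ≤ _ := ih hjD' hdisj'
  have hT : S ∪ (T \ S) = T := Finset.union_sdiff_of_subset hST
  have hjTS : j ∉ T \ S := fun h => hj (Finset.mem_sdiff.mp h).1
  have := main (T \ S) hjTS (Finset.sdiff_disjoint)
  rwa [hT] at this
end

section
/- For a monotone non-decreasing submodular set function f with f(∅) = 0 on a finite ground set, the greedy algorithm that iteratively adds the element of maximum marginal gain produces, after k steps, a set G with f(G) ≥ (1 − (1 − 1/k)^k) · max_{|S| ≤ k} f(S) ≥ (1 − 1/e) · max_{|S| ≤ k} f(S). -/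
open Finset

/-!
Submodularity bounds the gain of adding a whole set `S` to the current greedy set `G i` by the
sum of the single-element gains, each at most the greedy gain; with monotonicity this gives
`f S - f (G i) ≤ k · (f (G (i+1)) - f (G i))` whenever `#S ≤ k`. So the gap `f S - f (G i)`
shrinks by a factor `1 - 1/k` per step, and `(1 - 1/k)^k ≤ e⁻¹`.
-/

section Submodular

variable {ι : Type*} [DecidableEq ι] {f : Finset ι → ℝ}

theorem sub_le_sum_marginal
    (hsub : ∀ S T : Finset ι, S ⊆ T → ∀ j ∉ T, f (insert j T) - f T ≤ f (insert j S) - f S)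
    (D T : Finset ι) :
    f (D ∪ T) - f T ≤ ∑ x ∈ D, (f (insert x T) - f T) := by
  induction D using Finset.induction_on with
  | empty => simp
  | insert a D ha ih =>
    rw [sum_insert ha, insert_union]
    by_cases haT : a ∈ T
    · rw [insert_eq_of_mem (mem_union_right D haT), insert_eq_of_mem haT]
      linarith
    · have haDT : a ∉ D ∪ T := by simp [ha, haT]
      linarith [hsub T (D ∪ T) subset_union_right a haDT]

theorem sub_le_card_mul_max_marginal
    (hmono : ∀ S T : Finset ι, S ⊆ T → f S ≤ f T)
    (hsub : ∀ S T : Finset ι, S ⊆ T → ∀ j ∉ T, f (insert j T) - f T ≤ f (insert j S) - f S)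
    {T : Finset ι} {x : ι} (hmax : ∀ y, f (insert y T) ≤ f (insert x T)) (S : Finset ι) :
    f S - f T ≤ #S * (f (insert x T) - f T) :=
  calc f S - f T ≤ f (S ∪ T) - f T := by linarith [hmono S (S ∪ T) subset_union_left]
    _ ≤ ∑ y ∈ S, (f (insert y T) - f T) := sub_le_sum_marginal hsub S T
    _ ≤ #S * (f (insert x T) - f T) := by
      simpa using sum_le_card_nsmul S _ _ fun y _ ↦ sub_le_sub_right (hmax y) (f T)

end Submodular

theorem sub_le_one_sub_one_div_pow_mul_of_sub_le_mul_sub {a : ℕ → ℝ} {b c : ℝ} (hc : 1 ≤ c)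
    (ha0 : a 0 = 0) (hstep : ∀ i, b - a i ≤ c * (a (i + 1) - a i)) (n : ℕ) :
    b - a n ≤ (1 - 1 / c) ^ n * b := by
  induction n with
  | zero => simp [ha0]
  | succ n ih =>
    have hc0 : 0 < c := by linarith
    have hcontract : b - a (n + 1) ≤ (1 - 1 / c) * (b - a n) := by
      rw [one_sub_div hc0.ne', div_mul_eq_mul_div, le_div_iff₀ hc0]
      linarith [hstep n]
    have hr : 0 ≤ 1 - 1 / c := by
      rw [sub_nonneg, div_le_one hc0]
      exact hc
    calc b - a (n + 1) ≤ (1 - 1 / c) * (b - a n) := hcontract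
      _ ≤ (1 - 1 / c) * ((1 - 1 / c) ^ n * b) := mul_le_mul_of_nonneg_left ih hr
      _ = (1 - 1 / c) ^ (n + 1) * b := by ring

theorem greedy_submodular_guarantee_general {ι : Type*} [DecidableEq ι]
    (f : Finset ι → ℝ)
    (hmono : ∀ S T : Finset ι, S ⊆ T → f S ≤ f T)
    (hsub : ∀ S T : Finset ι, S ⊆ T → ∀ j ∉ T,
      f (insert j T) - f T ≤ f (insert j S) - f S)
    (hempty : f ∅ = 0)
    (k : ℕ) (hk : 0 < k)
    (g : ℕ → ι) (G : ℕ → Finset ι)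
    (hG0 : G 0 = ∅) (hGs : ∀ i, G (i + 1) = insert (g i) (G i))
    (hgreedy : ∀ i, ∀ x : ι, f (insert x (G i)) ≤ f (insert (g i) (G i))) :
    ∀ S : Finset ι, S.card ≤ k →
      (1 - (1 - 1 / (k : ℝ)) ^ k) * f S ≤ f (G k) ∧
      (1 - 1 / Real.exp 1) * f S ≤ f (G k) := by
  intro S hS
  have hk1 : (1 : ℝ) ≤ k := by exact_mod_cast hk
  have hstep (i : ℕ) : f S - f (G i) ≤ k * (f (G (i + 1)) - f (G i)) := by
    have hgain : 0 ≤ f (G (i + 1)) - f (G i) := by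
      rw [hGs]
      linarith [hmono (G i) _ (subset_insert (g i) (G i))]
    calc f S - f (G i) ≤ #S * (f (G (i + 1)) - f (G i)) := by
          rw [hGs]
          exact sub_le_card_mul_max_marginal hmono hsub (hgreedy i) S
      _ ≤ k * (f (G (i + 1)) - f (G i)) := by gcongr
  have hgap := sub_le_one_sub_one_div_pow_mul_of_sub_le_mul_sub hk1
    (by rw [hG0, hempty]) hstep k
  have hratio : (1 - 1 / (k : ℝ)) ^ k ≤ 1 / Real.exp 1 := by
    simpa [Real.exp_neg] using Real.one_sub_div_pow_le_exp_neg (n := k) (t := 1) hk1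
  have hfS : 0 ≤ f S := hempty ▸ hmono ∅ S (empty_subset S)
  have hfirst : (1 - (1 - 1 / (k : ℝ)) ^ k) * f S ≤ f (G k) := by linarith
  refine ⟨hfirst, ?_⟩
  calc (1 - 1 / Real.exp 1) * f S ≤ (1 - (1 - 1 / (k : ℝ)) ^ k) * f S := by gcongr
    _ ≤ f (G k) := hfirst

/-- Nemhauser–Wolsey–Fisher guarantee: for a monotone, submodular, normalized
set function `f` on a finite ground set, the greedy algorithm (with picks
`g i` and iterates `G 0 = ∅`, `G (i+1) = insert (g i) (G i)`, each pick
maximizing the marginal gain) satisfies, after `k` steps,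
`f (G k) ≥ (1 - (1 - 1/k)^k) · max_{|S| ≤ k} f S ≥ (1 - 1/e) · max_{|S| ≤ k} f S`. -/
theorem greedy_submodular_guarantee {ι : Type*} [Fintype ι] [DecidableEq ι]
    (f : Finset ι → ℝ)
    (hmono : ∀ S T : Finset ι, S ⊆ T → f S ≤ f T)
    (hsub : ∀ S T : Finset ι, S ⊆ T → ∀ j ∉ T,
      f (insert j T) - f T ≤ f (insert j S) - f S)
    (hempty : f ∅ = 0)
    (k : ℕ) (hk : 0 < k)
    (g : ℕ → ι) (G : ℕ → Finset ι)
    (hG0 : G 0 = ∅) (hGs : ∀ i, G (i + 1) = insert (g i) (G i))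
    (hgreedy : ∀ i, ∀ x : ι, f (insert x (G i)) ≤ f (insert (g i) (G i))) :
    ∀ S : Finset ι, S.card ≤ k →
      (1 - (1 - 1 / (k : ℝ)) ^ k) * f S ≤ f (G k) ∧
      (1 - 1 / Real.exp 1) * f S ≤ f (G k) :=
  greedy_submodular_guarantee_general f hmono hsub hempty k hk g G hG0 hGs hgreedy
end

section
/- Let f be a monotone submodular function with f(∅)=0, let OPT = max_{|S|≤k} f(S), and let G_i be the greedy set after i steps. Then OPT − f(G_{i+1}) ≤ (1 − 1/k)(OPT − f(G_i)). -/
open Finset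

private lemma telescope_bound {ι : Type*} [DecidableEq ι]
    (f : Finset ι → ℝ)
    (hsub : ∀ S T : Finset ι, S ⊆ T → ∀ j ∉ T,
      f (insert j T) - f T ≤ f (insert j S) - f S)
    (T : Finset ι) :
    ∀ A : Finset ι, Disjoint A T →
      f (T ∪ A) - f T ≤ ∑ x ∈ A, (f (insert x T) - f T) := by
  intro A
  induction A using Finset.induction_on with
  | empty => simp
  | @insert a A ha ih =>
    intro hdisj
    have hdA : Disjoint A T := (Finset.disjoint_insert_left.mp hdisj).2
    have haT : a ∉ T := (Finset.disjoint_insert_left.mp hdisj).1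
    have haTA : a ∉ T ∪ A := by simp [ha, haT]
    have h1 : f (insert a (T ∪ A)) - f (T ∪ A) ≤ f (insert a T) - f T :=
      hsub T (T ∪ A) Finset.subset_union_left a haTA
    have h2 := ih hdA
    rw [Finset.sum_insert ha, Finset.union_insert]
    linarith

/-- Per-step contraction for the greedy algorithm on a monotone, submodular,
normalized set function: if `Sopt` attains `OPT = max_{|S| ≤ k} f S`, then
`OPT - f (G (i+1)) ≤ (1 - 1/k) (OPT - f (G i))`. -/
theorem greedy_step_contraction {ι : Type*} [Fintype ι] [DecidableEq ι]
    (f : Finset ι → ℝ)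
    (hmono : ∀ S T : Finset ι, S ⊆ T → f S ≤ f T)
    (hsub : ∀ S T : Finset ι, S ⊆ T → ∀ j ∉ T,
      f (insert j T) - f T ≤ f (insert j S) - f S)
    (hempty : f ∅ = 0)
    (k : ℕ) (hk : 0 < k)
    (Sopt : Finset ι) (hcard : Sopt.card ≤ k)
    (hopt : ∀ S : Finset ι, S.card ≤ k → f S ≤ f Sopt)
    (g : ℕ → ι) (G : ℕ → Finset ι)
    (hG0 : G 0 = ∅) (hGs : ∀ i, G (i + 1) = insert (g i) (G i))
    (hgreedy : ∀ i, ∀ x : ι, f (insert x (G i)) ≤ f (insert (g i) (G i)))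
    (i : ℕ) :
    f Sopt - f (G (i + 1)) ≤ (1 - 1 / (k : ℝ)) * (f Sopt - f (G i)) := by
  set T := G i with hT
  set A := Sopt \ T with hA
  have hdisj : Disjoint A T := Finset.sdiff_disjoint
  -- δ : greedy gain
  set δ : ℝ := f (G (i + 1)) - f T with hδ
  have hδ0 : 0 ≤ δ := by
    have := hmono T (G (i + 1)) (by rw [hGs i]; exact Finset.subset_insert _ _)
    linarith
  -- each marginal is at most δ
  have hmarg : ∀ x ∈ A, f (insert x T) - f T ≤ δ := by
    intro x _
    have := hgreedy i x
    rw [hδ, hGs i]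
    linarith
  have h1 : f Sopt ≤ f (T ∪ A) := hmono _ _ (by
    intro x hx
    by_cases hxT : x ∈ T
    · exact Finset.mem_union_left _ hxT
    · exact Finset.mem_union_right _ (Finset.mem_sdiff.mpr ⟨hx, hxT⟩))
  have h2 := telescope_bound f hsub T A hdisj
  have h3 : ∑ x ∈ A, (f (insert x T) - f T) ≤ A.card * δ := by
    calc ∑ x ∈ A, (f (insert x T) - f T) ≤ ∑ _x ∈ A, δ :=
          Finset.sum_le_sum hmarg
      _ = A.card * δ := by rw [Finset.sum_const, nsmul_eq_mul]
  have hAk : (A.card : ℝ) ≤ k := by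
    exact_mod_cast le_trans (Finset.card_le_card (Finset.sdiff_subset)) hcard
  have h4 : (A.card : ℝ) * δ ≤ k * δ := mul_le_mul_of_nonneg_right hAk hδ0
  have hkey : f Sopt - f T ≤ k * δ := by linarith
  have hkpos : (0 : ℝ) < k := by exact_mod_cast hk
  have : (f Sopt - f T) / k ≤ δ := (div_le_iff₀ hkpos).mpr (by linarith [hkey])
  have hfin : f Sopt - f (G (i + 1)) = (f Sopt - f T) - δ := by rw [hδ]; ring
  rw [hfin]
  have : (1 - 1 / (k : ℝ)) * (f Sopt - f T) = (f Sopt - f T) - (f Sopt - f T) / k := by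
    field_simp
  rw [this]
  linarith [(div_le_iff₀ hkpos).mpr (by linarith [hkey] : f Sopt - f T ≤ δ * k)]
end

section
/- For fixed ε ≥ 1, the surjection probability t!·S(ε,t)/t^ε is non-increasing in t for t ≥ 1; equivalently, the recall probability P_recall(t,ε) is non-decreasing in the number of hash tables t. -/
/-- Stirling number of the second kind. -/
def stirling : ℕ → ℕ → ℕ
  | 0, 0 => 1
  | 0, _ + 1 => 0
  | _ + 1, 0 => 0
  | n + 1, k + 1 => (k + 1) * stirling n (k + 1) + stirling n k

open Function

noncomputable def surjCard (n k : ℕ) : ℕ :=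
  Fintype.card {f : Fin n → Fin k // Surjective f}

lemma surjCard_zero_zero : surjCard 0 0 = 1 := by
  rw [surjCard, Fintype.card_eq_one_iff]
  refine ⟨⟨fun i => i.elim0, fun y => y.elim0⟩, ?_⟩
  rintro ⟨f, hf⟩
  ext i
  exact i.elim0

lemma surjCard_zero_succ (k : ℕ) : surjCard 0 (k + 1) = 0 := by
  rw [surjCard, Fintype.card_eq_zero_iff]
  refine ⟨fun ⟨f, hf⟩ => ?_⟩
  obtain ⟨i, -⟩ := hf 0
  exact i.elim0

lemma surjCard_succ_zero (n : ℕ) : surjCard (n + 1) 0 = 0 := by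
  rw [surjCard, Fintype.card_eq_zero_iff]
  exact ⟨fun ⟨f, hf⟩ => (f 0).elim0⟩

lemma card_cons_surj (n k : ℕ) (v : Fin (k + 1)) :
    Fintype.card {g : Fin n → Fin (k + 1) //
        Surjective (Fin.cons v g : Fin (n + 1) → Fin (k + 1))} =
      surjCard n (k + 1) + surjCard n k := by
  classical
  set P : (Fin n → Fin (k + 1)) → Prop := fun g => Surjective g with hP
  set Q : (Fin n → Fin (k + 1)) → Prop := fun g =>
    (∀ y, y ≠ v → ∃ i, g i = y) ∧ ¬ Surjective g with hQ
  have hiff : ∀ g : Fin n → Fin (k + 1),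
      Surjective (Fin.cons v g : Fin (n + 1) → Fin (k + 1)) ↔ P g ∨ Q g := by
    intro g
    constructor
    · intro hs
      by_cases hg : Surjective g
      · exact Or.inl hg
      · refine Or.inr ⟨fun y hy => ?_, hg⟩
        obtain ⟨j, hj⟩ := hs y
        refine Fin.cases ?_ ?_ j hj
        · intro h0; simp at h0; exact absurd h0.symm hy
        · intro i hi; exact ⟨i, by simpa using hi⟩
    · rintro (hg | ⟨hg, -⟩)
      · intro y
        obtain ⟨i, hi⟩ := hg y
        exact ⟨i.succ, by simpa using hi⟩
      · intro y
        by_cases hy : y = v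
        · exact ⟨0, by simp [hy]⟩
        · obtain ⟨i, hi⟩ := hg y hy
          exact ⟨i.succ, by simpa using hi⟩
  have e1 : {g : Fin n → Fin (k + 1) //
        Surjective (Fin.cons v g : Fin (n + 1) → Fin (k + 1))} ≃
      {g : Fin n → Fin (k + 1) // P g ∨ Q g} :=
    Equiv.subtypeEquivRight hiff
  have hdisj : Disjoint P Q := by
    rw [disjoint_iff_inf_le]
    intro g hg
    exact hg.2.2 hg.1
  have e2 := subtypeOrEquiv P Q hdisj
  have hPcard : Fintype.card {g : Fin n → Fin (k + 1) // P g} = surjCard n (k + 1) :=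
    Fintype.card_congr (Equiv.refl _)
  have hQcard : Fintype.card {g : Fin n → Fin (k + 1) // Q g} = surjCard n k := by
    rw [surjCard]
    symm
    apply Fintype.card_of_bijective
      (f := fun h : {h : Fin n → Fin k // Surjective h} =>
        (⟨fun i => v.succAbove (h.1 i), ?_⟩ : {g // Q g}))
    · constructor
      · rintro ⟨h, hh⟩ ⟨h', hh'⟩ he
        simp only [Subtype.mk.injEq] at he ⊢
        funext i
        have := congrFun he i
        exact v.succAbove_right_injective this
      · rintro ⟨g, hg⟩
        have hne : ∀ i, g i ≠ v := by
          intro i hi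
          apply hg.2
          intro y
          by_cases hy : y = v
          · exact ⟨i, hi.trans hy.symm⟩
          · exact hg.1 y hy
        choose h hh using fun i => Fin.exists_succAbove_eq (hne i)
        refine ⟨⟨h, ?_⟩, ?_⟩
        · intro x
          obtain ⟨i, hi⟩ := hg.1 (v.succAbove x) (Fin.succAbove_ne v x)
          exact ⟨i, v.succAbove_right_injective (by rw [hh i, hi])⟩
        · exact Subtype.ext (funext fun i => hh i)
    · constructor
      · intro y hy
        obtain ⟨x, hx⟩ := Fin.exists_succAbove_eq hy
        obtain ⟨i, hi⟩ := h.2 x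
        exact ⟨i, by simp only []; rw [hi, hx]⟩
      · intro hs
        obtain ⟨i, hi⟩ := hs v
        exact Fin.succAbove_ne v (h.1 i) (by simpa using hi)
  rw [Fintype.card_congr (e1.trans e2), Fintype.card_sum, hPcard, hQcard]

lemma surjCard_succ_succ (n k : ℕ) :
    surjCard (n + 1) (k + 1) = (k + 1) * (surjCard n (k + 1) + surjCard n k) := by
  classical
  have e0 : {f : Fin (n + 1) → Fin (k + 1) // Surjective f} ≃
      {p : Fin (k + 1) × (Fin n → Fin (k + 1)) //
        Surjective (Fin.cons p.1 p.2 : Fin (n + 1) → Fin (k + 1))} := by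
    refine (Equiv.subtypeEquiv (Fin.consEquiv fun _ => Fin (k + 1)) ?_).symm
    rintro ⟨v, g⟩
    simp [Fin.consEquiv]
  have e3 : {p : Fin (k + 1) × (Fin n → Fin (k + 1)) //
        Surjective (Fin.cons p.1 p.2 : Fin (n + 1) → Fin (k + 1))} ≃
      Σ v : Fin (k + 1), {g : Fin n → Fin (k + 1) //
        Surjective (Fin.cons v g : Fin (n + 1) → Fin (k + 1))} :=
    Equiv.subtypeProdEquivSigmaSubtype
      (fun (v : Fin (k + 1)) (g : Fin n → Fin (k + 1)) =>
        Surjective (Fin.cons v g : Fin (n + 1) → Fin (k + 1)))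
  rw [surjCard, Fintype.card_congr (e0.trans e3), Fintype.card_sigma]
  simp [card_cons_surj, Finset.sum_const, Finset.card_univ]

lemma surjCard_eq (n : ℕ) : ∀ k, surjCard n k = k.factorial * stirling n k := by
  induction n with
  | zero =>
    rintro (_ | k)
    · simpa [stirling] using surjCard_zero_zero
    · simp [stirling, surjCard_zero_succ]
  | succ n ih =>
    rintro (_ | k)
    · simp [stirling, surjCard_succ_zero]
    · rw [surjCard_succ_succ, ih, ih, stirling, Nat.factorial_succ]
      ring

/-- Coupling inequality: the count of (surjection onto `t+1`, arbitrary map to `t`) pairs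
is at most the count of (surjection onto `t`, arbitrary map to `t+1`) pairs. -/
lemma key_ineq (n t : ℕ) :
    surjCard n (t + 1) * t ^ n ≤ surjCard n t * (t + 1) ^ n := by
  classical
  have hcard1 : surjCard n (t + 1) * t ^ n =
      Fintype.card ({f : Fin n → Fin (t + 1) // Surjective f} × (Fin n → Fin t)) := by
    simp [surjCard, Fintype.card_prod, Fintype.card_fun]
  have hcard2 : surjCard n t * (t + 1) ^ n =
      Fintype.card ({f : Fin n → Fin t // Surjective f} × (Fin n → Fin (t + 1))) := by
    simp [surjCard, Fintype.card_prod, Fintype.card_fun]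
  rw [hcard1, hcard2]
  -- coordinatewise encoding maps
  set φ1 : Fin (t + 1) → Fin t → Fin t := fun a b =>
    if h : (a : ℕ) < t then ⟨a, h⟩ else b with hφ1
  set φ2 : Fin (t + 1) → Fin t → Fin (t + 1) := fun a b =>
    if (a : ℕ) < t then b.castSucc else Fin.last t with hφ2
  have hpair : ∀ a a' : Fin (t + 1), ∀ b b' : Fin t,
      φ1 a b = φ1 a' b' → φ2 a b = φ2 a' b' → a = a' ∧ b = b' := by
    intro a a' b b' h1 h2
    by_cases ha : (a : ℕ) < t <;> by_cases ha' : (a' : ℕ) < t <;>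
      simp only [hφ1, hφ2, ha, ha', dif_pos, dif_neg, if_pos, if_neg, not_false_iff] at h1 h2
    · exact ⟨Fin.ext (by simpa using congrArg Fin.val h1), Fin.castSucc_injective _ h2⟩
    · exact absurd (congrArg Fin.val h2) (by simp [Fin.lt_iff_val_lt_val]; omega)
    · exact absurd (congrArg Fin.val h2) (by simp; omega)
    · have : (a : ℕ) = t := by omega
      have : (a' : ℕ) = t := by omega
      exact ⟨Fin.ext (by omega), h1⟩
  apply Fintype.card_le_of_injective
    (f := fun p : {f : Fin n → Fin (t + 1) // Surjective f} × (Fin n → Fin t) =>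
      ((⟨fun i => φ1 (p.1.1 i) (p.2 i), ?_⟩ : {f : Fin n → Fin t // Surjective f}),
        fun i => φ2 (p.1.1 i) (p.2 i)))
  · rintro ⟨⟨f, hf⟩, g⟩ ⟨⟨f', hf'⟩, g'⟩ he
    simp only [Prod.mk.injEq, Subtype.mk.injEq] at he ⊢
    obtain ⟨h1, h2⟩ := he
    have : ∀ i, f i = f' i ∧ g i = g' i := fun i =>
      hpair _ _ _ _ (congrFun h1 i) (congrFun h2 i)
    exact ⟨funext fun i => (this i).1, funext fun i => (this i).2⟩
  · -- surjectivity of the first component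
    intro y
    obtain ⟨i, hi⟩ := p.1.2 y.castSucc
    refine ⟨i, ?_⟩
    have hlt : ((p.1.1 i : Fin (t + 1)) : ℕ) < t := by
      rw [hi]; simpa using y.isLt
    simp only [hφ1, dif_pos hlt]
    exact Fin.ext (by simpa using congrArg Fin.val hi)


/-- For fixed `ε ≥ 1`, the surjection probability `t! S(ε,t) / t^ε` is
non-increasing in the number of tables `t ≥ 1`; equivalently, the recall
probability `P_recall(t,ε) = 1 - t! S(ε,t) / t^ε` is non-decreasing in `t`. -/
theorem surjection_prob_antitone_in_t (ε : ℕ) (hε : 1 ≤ ε) (t : ℕ) (ht : 1 ≤ t) :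
    ((t + 1).factorial * stirling ε (t + 1) : ℝ) / ((t : ℝ) + 1) ^ ε ≤
      (t.factorial * stirling ε t : ℝ) / (t : ℝ) ^ ε ∧
    1 - (t.factorial * stirling ε t : ℝ) / (t : ℝ) ^ ε ≤
      1 - ((t + 1).factorial * stirling ε (t + 1) : ℝ) / ((t : ℝ) + 1) ^ ε := by
  have hnat : (t + 1).factorial * stirling ε (t + 1) * t ^ ε ≤
      t.factorial * stirling ε t * (t + 1) ^ ε := by
    have := key_ineq ε t
    rwa [surjCard_eq, surjCard_eq] at this
  have ht0 : (0 : ℝ) < (t : ℝ) ^ ε :=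
    pow_pos (by exact_mod_cast ht) ε
  have ht1 : (0 : ℝ) < ((t : ℝ) + 1) ^ ε :=
    pow_pos (by positivity) ε
  have hmain : ((t + 1).factorial * stirling ε (t + 1) : ℝ) / ((t : ℝ) + 1) ^ ε ≤
      (t.factorial * stirling ε t : ℝ) / (t : ℝ) ^ ε := by
    rw [div_le_div_iff₀ ht1 ht0]
    have : ((t + 1).factorial * stirling ε (t + 1) * t ^ ε : ℝ) ≤
        (t.factorial * stirling ε t * (t + 1) ^ ε : ℝ) := by
      exact_mod_cast hnat
    push_cast at this ⊢
    linarith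
  exact ⟨hmain, by linarith⟩
end
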